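/- arXiv:2209.12785 — 3 statements merged into one kernel-verified Lean document; each statement's English description precedes it below -/
import Mathlib

section
/- For K=2, the XP-HARQ outage probability equals P_out,2 = (1 − e^{−(σ²/P1)(2^{R1}−1)})·(1 − e^{−(σ²/P2)(2^{R2}−1)}) + e^{−(σ²/P2)(2^{R2}−1)} − e^{−(σ²/P2)(2^{R1+R2}−1)} − φ(R1,R2), where φ(R1,R2) = (σ²/P2)·e^{σ²/P1 + σ²/P2}·∫_{2^{R2}}^{2^{R1+R2}} exp(−2^{R1+R2}σ²/(z·P1) − σ²z/P2) dz. -/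
open MeasureTheory ProbabilityTheory Real Filter

/-- `φ(R₁,R₂) = (σ²/P₂)·e^{σ²/P₁ + σ²/P₂}·∫_{2^{R₂}}^{2^{R₁+R₂}}
      exp(−2^{R₁+R₂}σ²/(z·P₁) − σ²z/P₂) dz`. -/
noncomputable def phiXP (σ2 P1 P2 R1 R2 : ℝ) : ℝ :=
  (σ2 / P2) * Real.exp (σ2 / P1 + σ2 / P2) *
    ∫ z in ((2:ℝ) ^ R2)..((2:ℝ) ^ (R1 + R2)),
      Real.exp (-((2:ℝ) ^ (R1 + R2) * σ2 / (z * P1)) - σ2 * z / P2)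

/-! Write `A = 2^R₁`, `B = 2^(R₁+R₂)` and `λᵢ = σ²/Pᵢ`. The outage event is
`{1 + γ₁ < A, (1 + γ₁)(1 + γ₂) < B}`, so conditioning on `γ₁ = x` gives
`P_out,2 = ∫₀^{A-1} λ₁ e^{-λ₁ x} (1 - e^{-λ₂ (B/(1+x) - 1)}) dx`.
After `u = 1 + x` the only non-elementary part is `∫₁^A λ₁ k(u) du` with
`k(u) = e^{-(λ₁ u + λ₂ B/u)}`. Since `λ₁ k = λ₂ (B/u²) k - k'`, this is `λ₂ ∫₁^A (B/u²) k(u) du`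
up to boundary terms, and the substitution `z = B/u` turns that integral into the one in `φ`. -/

open Set
open scoped Interval

namespace ProbabilityTheory

lemma expMeasure_Iio {r : ℝ} (hr : 0 < r) (t : ℝ) :
    expMeasure r (Iio t) = ENNReal.ofReal (1 - exp (-(r * t))) := by
  rw [expMeasure, gammaMeasure, withDensity_apply _ measurableSet_Iio,
    setLIntegral_congr Iio_ae_eq_Iic]
  change ∫⁻ x in Iic t, exponentialPDF r x = _
  rw [lintegral_exponentialPDF_eq_antiDeriv hr]
  split_ifs with ht
  · rfl
  -- for `t < 0` the right-hand side is `ofReal` of a negative number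
  · rw [ENNReal.ofReal_zero, eq_comm, ENNReal.ofReal_eq_zero, sub_nonpos, one_le_exp_iff]
    nlinarith

lemma ae_nonneg_expMeasure {r : ℝ} (hr : 0 < r) : ∀ᵐ x ∂expMeasure r, 0 ≤ x := by
  simpa [ae_iff, ← Iio_def] using expMeasure_Iio hr 0

lemma IndepFun.measure_pair_mem_eq_prod {Ω α β : Type*} [MeasurableSpace Ω] [MeasurableSpace α]
    [MeasurableSpace β] {μ : Measure Ω} {X : Ω → α} {Y : Ω → β} {ν₁ : Measure α} {ν₂ : Measure β}
    [SigmaFinite ν₁] [SigmaFinite ν₂] (hXY : IndepFun X Y μ) (hX : μ.map X = ν₁)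
    (hY : μ.map Y = ν₂) (hν₁ : ν₁ ≠ 0) (hν₂ : ν₂ ≠ 0) {s : Set (α × β)} (hs : MeasurableSet s) :
    μ {ω | (X ω, Y ω) ∈ s} = ν₁.prod ν₂ s := by
  have hXm : AEMeasurable X μ := .of_map_ne_zero (hX ▸ hν₁)
  have hYm : AEMeasurable Y μ := .of_map_ne_zero (hY ▸ hν₂)
  subst hX hY
  rw [← (indepFun_iff_map_prod_eq_prod_map_map' hXm hYm ‹_› ‹_›).mp hXY,
    Measure.map_apply_of_aemeasurable (hXm.prodMk hYm) hs]
  rfl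

lemma ae_nonneg_of_map_eq_expMeasure {Ω : Type*} [MeasurableSpace Ω] {μ : Measure Ω} {X : Ω → ℝ}
    {r : ℝ} (hr : 0 < r) (hX : μ.map X = expMeasure r) : ∀ᵐ ω ∂μ, 0 ≤ X ω :=
  have := isProbabilityMeasure_expMeasure hr
  ae_of_ae_map (.of_map_ne_zero (hX ▸ IsProbabilityMeasure.ne_zero _))
    (hX ▸ ae_nonneg_expMeasure hr)

end ProbabilityTheory

lemma integral_comp_div_mul_div_sq {a b c : ℝ} (ha : 0 < a) (hb : 0 < b) {g : ℝ → ℝ}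
    (hg : ContinuousOn g ((c / ·) '' [[a, b]])) :
    ∫ u in a..b, g (c / u) * (c / u ^ 2) = ∫ z in c / b..c / a, g z := by
  have hpos : ∀ u ∈ [[a, b]], 0 < u := fun u hu =>
    lt_of_lt_of_le (lt_min ha hb) hu.1
  have hderiv : ∀ u ∈ [[a, b]], HasDerivAt (c / ·) (-(c / u ^ 2)) u := fun u hu => by
    simpa [div_eq_mul_inv] using (hasDerivAt_inv (hpos u hu).ne').const_mul c
  have hcont : ContinuousOn (fun u => -(c / u ^ 2)) [[a, b]] :=
    (continuousOn_const.div (continuousOn_pow 2) fun u hu => pow_ne_zero 2 (hpos u hu).ne').neg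
  rw [intervalIntegral.integral_symm (c / a),
    ← intervalIntegral.integral_comp_mul_deriv' hderiv hcont hg, ← intervalIntegral.integral_neg]
  simp only [Function.comp_apply, mul_neg, neg_neg]

lemma integral_mul_exp_neg_add_div {a b c l₁ l₂ : ℝ} (ha : 0 < a) (hb : 0 < b) (hc : c ≠ 0) :
    ∫ u in a..b, l₁ * exp (-(l₁ * u + l₂ * c / u))
      = l₂ * (∫ z in c / b..c / a, exp (-(l₁ * c / z + l₂ * z)))
        + exp (-(l₁ * a + l₂ * c / a)) - exp (-(l₁ * b + l₂ * c / b)) := by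
  have hpos : ∀ u ∈ [[a, b]], 0 < u := fun u hu =>
    lt_of_lt_of_le (lt_min ha hb) hu.1
  set k : ℝ → ℝ := fun u => exp (-(l₁ * u + l₂ * c / u))
  set g : ℝ → ℝ := fun z => exp (-(l₁ * c / z + l₂ * z))
  have hk : ∀ u ∈ [[a, b]], HasDerivAt k ((l₂ * (c / u ^ 2) - l₁) * k u) u := fun u hu => by
    have hdiv : HasDerivAt (fun u => c / u) (-(c / u ^ 2)) u := by
      simpa [div_eq_mul_inv] using (hasDerivAt_inv (hpos u hu).ne').const_mul c
    have := (((hasDerivAt_id u).const_mul l₁).add (hdiv.const_mul l₂)).neg.exp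
    convert this using 1
    · ext u; simp [k, mul_div_assoc]
    · simp only [k, Pi.neg_apply, Pi.add_apply, id, mul_div_assoc]; ring
  have hgk : ∀ u ∈ [[a, b]], g (c / u) = k u := fun u hu => by
    simp only [g, k, div_div_eq_mul_div, mul_div_assoc, mul_div_cancel_left₀ _ hc]
  have hcont_k : ContinuousOn k [[a, b]] := fun u hu => (hk u hu).continuousAt.continuousWithinAt
  have hcont_w : ContinuousOn (fun u => c / u ^ 2) [[a, b]] :=
    continuousOn_const.div (continuousOn_pow 2) fun u hu => pow_ne_zero 2 (hpos u hu).ne'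
  have hcont_g : ContinuousOn g ((c / ·) '' [[a, b]]) := by
    rintro _ ⟨u, hu, rfl⟩
    have hne : c / u ≠ 0 := div_ne_zero hc (hpos u hu).ne'
    exact ContinuousAt.continuousWithinAt (by fun_prop (disch := exact hne))
  have hftc : ∫ u in a..b, (l₂ * (c / u ^ 2) - l₁) * k u = k b - k a :=
    intervalIntegral.integral_eq_sub_of_hasDerivAt hk
      (((continuousOn_const.mul hcont_w).sub continuousOn_const).mul hcont_k).intervalIntegrable
  have hsubst : ∫ u in a..b, c / u ^ 2 * k u = ∫ z in c / b..c / a, g z := by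
    rw [← integral_comp_div_mul_div_sq ha hb hcont_g]
    refine intervalIntegral.integral_congr fun u hu => ?_
    simp only [hgk u hu, mul_comm]
  have hsplit : ∫ u in a..b, l₁ * k u
      = l₂ * (∫ u in a..b, c / u ^ 2 * k u) - ∫ u in a..b, (l₂ * (c / u ^ 2) - l₁) * k u := by
    rw [← intervalIntegral.integral_const_mul, ← intervalIntegral.integral_sub]
    · exact intervalIntegral.integral_congr fun u _ => by ring
    · exact ((continuousOn_const.mul (hcont_w.mul hcont_k))).intervalIntegrable
    · exact ((((continuousOn_const.mul hcont_w).sub continuousOn_const).mul hcont_k)).intervalIntegrable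
  rw [hsplit, hsubst, hftc]
  ring

lemma integral_mul_exp_neg_mul {l : ℝ} (a : ℝ) :
    ∫ x in 0..a, l * exp (-(l * x)) = 1 - exp (-(l * a)) := by
  rw [intervalIntegral.integral_eq_sub_of_hasDerivAt (fun x _ => hasDerivAt_neg_exp_mul_exp)
    ((by fun_prop : Continuous fun x => l * exp (-(l * x))).intervalIntegrable _ _)]
  simp only [mul_zero, neg_zero, exp_zero]
  ring

lemma integral_mul_exp_neg_mul_mul_one_sub_exp {l₁ l₂ A C : ℝ} (hA : 0 < A) (hC : C ≠ 0) :
    ∫ x in 0..A - 1, l₁ * exp (-(l₁ * x)) * (1 - exp (-(l₂ * (A * C / (1 + x) - 1))))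
      = (1 - exp (-l₁ * (A - 1))) * (1 - exp (-l₂ * (C - 1))) + exp (-l₂ * (C - 1))
        - exp (-l₂ * (A * C - 1))
        - l₂ * exp (l₁ + l₂) * ∫ z in C..A * C, exp (-(l₁ * (A * C) / z + l₂ * z)) := by
  have hAC : A * C ≠ 0 := mul_ne_zero hA.ne' hC
  have hshift : ∫ x in 0..A - 1, l₁ * exp (-(l₁ * (1 + x) + l₂ * (A * C) / (1 + x)))
      = ∫ u in 1..A, l₁ * exp (-(l₁ * u + l₂ * (A * C) / u)) := by
    simpa using intervalIntegral.integral_comp_add_left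
      (fun u => l₁ * exp (-(l₁ * u + l₂ * (A * C) / u))) 1 (a := 0) (b := A - 1)
  have hsplit : ∫ x in 0..A - 1, l₁ * exp (-(l₁ * x)) * (1 - exp (-(l₂ * (A * C / (1 + x) - 1))))
      = (∫ x in 0..A - 1, l₁ * exp (-(l₁ * x)))
        - exp (l₁ + l₂) * ∫ x in 0..A - 1, l₁ * exp (-(l₁ * (1 + x) + l₂ * (A * C) / (1 + x))) := by
    have hne : ∀ x ∈ [[0, A - 1]], 1 + x ≠ 0 := fun x hx => by
      rcases min_le_iff.mp hx.1 with h | h <;> linarith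
    have hcont : ContinuousOn (fun x => l₁ * exp (-(l₁ * (1 + x) + l₂ * (A * C) / (1 + x))))
        [[0, A - 1]] := fun x hx =>
      ContinuousAt.continuousWithinAt (by fun_prop (disch := exact hne x hx))
    rw [← intervalIntegral.integral_const_mul, ← intervalIntegral.integral_sub
      ((by fun_prop : Continuous fun x => l₁ * exp (-(l₁ * x))).intervalIntegrable _ _)
      (hcont.intervalIntegrable.const_mul _)]
    refine intervalIntegral.integral_congr fun x _ => ?_
    rw [mul_sub, mul_one, mul_left_comm, mul_assoc, ← exp_add, ← exp_add]
    ring_nf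
  rw [hsplit, hshift, integral_mul_exp_neg_mul, integral_mul_exp_neg_add_div one_pos hA hAC,
    mul_div_cancel_left₀ _ hA.ne', div_one]
  have e1 : exp (l₁ + l₂) * exp (-(l₁ * 1 + l₂ * (A * C) / 1)) = exp (-l₂ * (A * C - 1)) := by
    rw [← exp_add]; congr 1; ring
  have e2 : exp (l₁ + l₂) * exp (-(l₁ * A + l₂ * (A * C) / A))
      = exp (-l₁ * (A - 1)) * exp (-l₂ * (C - 1)) := by
    rw [← exp_add, ← exp_add]; congr 1; field_simp; ring
  have e3 : exp (-(l₁ * (A - 1))) = exp (-l₁ * (A - 1)) := by rw [neg_mul]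
  linear_combination -e3 - e1 + e2

def outageRegion (A B : ℝ) : Set (ℝ × ℝ) := {p | 1 + p.1 < A ∧ (1 + p.1) * (1 + p.2) < B}

lemma measurableSet_outageRegion (A B : ℝ) : MeasurableSet (outageRegion A B) := by
  rw [outageRegion, ofPred_and]
  exact (measurableSet_lt (by fun_prop) measurable_const).inter
    (measurableSet_lt (by fun_prop) measurable_const)

lemma expMeasure_prodMk_preimage_outageRegion {l A B x : ℝ} (hl : 0 < l) (hx : 0 < 1 + x) :
    expMeasure l (Prod.mk x ⁻¹' outageRegion A B)
      = if 1 + x < A then ENNReal.ofReal (1 - exp (-(l * (B / (1 + x) - 1)))) else 0 := by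
  split_ifs with hxA
  · rw [← expMeasure_Iio hl]
    congr 1
    ext y
    simp only [outageRegion, mem_preimage, mem_ofPred_eq, mem_Iio, hxA, true_and,
      lt_sub_iff_add_lt, lt_div_iff₀ hx]
    rw [add_comm y, mul_comm]
  · convert measure_empty (μ := expMeasure l)
    ext y
    simp [outageRegion, hxA]

lemma expMeasure_prod_outageRegion {l₁ l₂ A B : ℝ} (hl₁ : 0 < l₁) (hl₂ : 0 < l₂) (hA : 1 ≤ A)
    (hAB : A ≤ B) :
    ((expMeasure l₁).prod (expMeasure l₂)).real (outageRegion A B)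
      = ∫ x in 0..A - 1, l₁ * exp (-(l₁ * x)) * (1 - exp (-(l₂ * (B / (1 + x) - 1)))) := by
  set h : ℝ → ℝ := fun x => l₁ * exp (-(l₁ * x)) * (1 - exp (-(l₂ * (B / (1 + x) - 1))))
  have hpt : ∀ x, exponentialPDF l₁ x * expMeasure l₂ (Prod.mk x ⁻¹' outageRegion A B)
      = (Ico 0 (A - 1)).indicator (fun x => ENNReal.ofReal (h x)) x := by
    intro x
    rcases lt_or_ge x 0 with hx | hx
    · rw [exponentialPDF_of_neg hx, zero_mul, indicator_of_notMem (fun hmem => hx.not_ge hmem.1)]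
    · rw [exponentialPDF_of_nonneg hx, expMeasure_prodMk_preimage_outageRegion hl₂ (by linarith)]
      by_cases hxA : 1 + x < A
      · rw [if_pos hxA, indicator_of_mem (mem_Ico.mpr ⟨hx, by linarith⟩),
          ← ENNReal.ofReal_mul (by positivity)]
      · rw [if_neg hxA, mul_zero, indicator_of_notMem (fun hmem => hxA (by linarith [hmem.2]))]
  have hnn : ∀ x ∈ Ico 0 (A - 1), 0 ≤ h x := fun x hx => by
    have h1 : 1 ≤ B / (1 + x) := (one_le_div (by linarith [hx.1])).mpr (by linarith [hx.2])
    have h2 : exp (-(l₂ * (B / (1 + x) - 1))) ≤ 1 :=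
      exp_le_one_iff.mpr (neg_nonpos.mpr (mul_nonneg hl₂.le (by linarith)))
    exact mul_nonneg (by positivity) (by linarith)
  have hint : IntegrableOn h (Icc 0 (A - 1)) := ContinuousOn.integrableOn_Icc fun x hx =>
    ContinuousAt.continuousWithinAt (by fun_prop (disch := linarith [hx.1]))
  have : IsProbabilityMeasure (expMeasure l₂) := isProbabilityMeasure_expMeasure hl₂
  have hexp : expMeasure l₁ = volume.withDensity (exponentialPDF l₁) := rfl
  rw [measureReal_def, Measure.prod_apply (measurableSet_outageRegion A B), hexp,
    lintegral_withDensity_eq_lintegral_mul _ (f := exponentialPDF l₁)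
      (measurable_exponentialPDFReal l₁).ennreal_ofReal
      (measurable_measure_prodMk_left (measurableSet_outageRegion A B))]
  simp only [Pi.mul_apply, hpt]
  rw [lintegral_indicator measurableSet_Ico,
    ← ofReal_integral_eq_lintegral_ofReal (hint.mono_set Ico_subset_Icc_self)
      ((ae_restrict_iff' measurableSet_Ico).mpr (ae_of_all _ hnn)),
    ENNReal.toReal_ofReal (setIntegral_nonneg measurableSet_Ico hnn),
    integral_Ico_eq_integral_Ioc, ← intervalIntegral.integral_of_le (by linarith)]

lemma Real.logb_lt_and_add_logb_lt_iff {b u v s t : ℝ} (hb : 1 < b) (hu : 0 < u) (hv : 0 < v) :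
    logb b u < s ∧ logb b u + logb b v < s + t ↔ u < b ^ s ∧ u * v < b ^ (s + t) := by
  rw [← logb_mul hu.ne' hv.ne', logb_lt_iff_lt_rpow hb hu, logb_lt_iff_lt_rpow hb (mul_pos hu hv)]

theorem outage_K2_closed_form_general
    {Ω : Type*} [MeasurableSpace Ω] (μ : Measure Ω)
    (σ2 P1 P2 R1 R2 : ℝ) (hσ : 0 < σ2) (hP1 : 0 < P1) (hP2 : 0 < P2)
    (hR1 : 0 < R1) (hR2 : 0 < R2)
    (γ1 γ2 : Ω → ℝ)
    (hind : IndepFun γ1 γ2 μ)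
    (hd1 : Measure.map γ1 μ = expMeasure (σ2 / P1))
    (hd2 : Measure.map γ2 μ = expMeasure (σ2 / P2)) :
    (μ {ω | Real.logb 2 (1 + γ1 ω) < R1 ∧
        Real.logb 2 (1 + γ1 ω) + Real.logb 2 (1 + γ2 ω) < R1 + R2}).toReal
      = (1 - Real.exp (-(σ2 / P1) * ((2:ℝ) ^ R1 - 1)))
          * (1 - Real.exp (-(σ2 / P2) * ((2:ℝ) ^ R2 - 1)))
        + Real.exp (-(σ2 / P2) * ((2:ℝ) ^ R2 - 1))
        - Real.exp (-(σ2 / P2) * ((2:ℝ) ^ (R1 + R2) - 1))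
        - phiXP σ2 P1 P2 R1 R2 := by
  have hl₁ : 0 < σ2 / P1 := div_pos hσ hP1
  have hl₂ : 0 < σ2 / P2 := div_pos hσ hP2
  have hA : 1 ≤ (2:ℝ) ^ R1 := one_le_rpow one_le_two hR1.le
  have hC : 1 ≤ (2:ℝ) ^ R2 := one_le_rpow one_le_two hR2.le
  have hB : (2:ℝ) ^ (R1 + R2) = 2 ^ R1 * 2 ^ R2 := rpow_add two_pos R1 R2
  have hevent : {ω | logb 2 (1 + γ1 ω) < R1 ∧ logb 2 (1 + γ1 ω) + logb 2 (1 + γ2 ω) < R1 + R2}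
      =ᵐ[μ] {ω | (γ1 ω, γ2 ω) ∈ outageRegion (2 ^ R1) (2 ^ (R1 + R2))} := by
    filter_upwards [ae_nonneg_of_map_eq_expMeasure hl₁ hd1, ae_nonneg_of_map_eq_expMeasure hl₂ hd2]
      with ω h₁ h₂
    exact propext (logb_lt_and_add_logb_lt_iff one_lt_two (by linarith) (by linarith))
  have := isProbabilityMeasure_expMeasure hl₁
  have := isProbabilityMeasure_expMeasure hl₂
  rw [measure_congr hevent, hind.measure_pair_mem_eq_prod hd1 hd2 (IsProbabilityMeasure.ne_zero _)
    (IsProbabilityMeasure.ne_zero _) (measurableSet_outageRegion _ _), ← measureReal_def, hB,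
    expMeasure_prod_outageRegion hl₁ hl₂ hA (le_mul_of_one_le_right (by positivity) hC),
    integral_mul_exp_neg_mul_mul_one_sub_exp (by positivity) (by positivity), phiXP, hB]
  congr 4 with z
  congr 1
  ring

/-- For `K = 2`, the XP-HARQ outage probability equals
`(1 − e^{−(σ²/P₁)(2^{R₁}−1)})·(1 − e^{−(σ²/P₂)(2^{R₂}−1)})
  + e^{−(σ²/P₂)(2^{R₂}−1)} − e^{−(σ²/P₂)(2^{R₁+R₂}−1)} − φ(R₁,R₂)`. -/
theorem outage_K2_closed_form
    {Ω : Type*} [MeasurableSpace Ω] (μ : Measure Ω) [IsProbabilityMeasure μ]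
    (σ2 P1 P2 R1 R2 : ℝ) (hσ : 0 < σ2) (hP1 : 0 < P1) (hP2 : 0 < P2)
    (hR1 : 0 < R1) (hR2 : 0 < R2)
    (γ1 γ2 : Ω → ℝ) (hm1 : Measurable γ1) (hm2 : Measurable γ2)
    (hind : IndepFun γ1 γ2 μ)
    (hd1 : Measure.map γ1 μ = expMeasure (σ2 / P1))
    (hd2 : Measure.map γ2 μ = expMeasure (σ2 / P2)) :
    (μ {ω | Real.logb 2 (1 + γ1 ω) < R1 ∧
        Real.logb 2 (1 + γ1 ω) + Real.logb 2 (1 + γ2 ω) < R1 + R2}).toReal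
      = (1 - Real.exp (-(σ2 / P1) * ((2:ℝ) ^ R1 - 1)))
          * (1 - Real.exp (-(σ2 / P2) * ((2:ℝ) ^ R2 - 1)))
        + Real.exp (-(σ2 / P2) * ((2:ℝ) ^ R2 - 1))
        - Real.exp (-(σ2 / P2) * ((2:ℝ) ^ (R1 + R2) - 1))
        - phiXP σ2 P1 P2 R1 R2 :=
  outage_K2_closed_form_general μ σ2 P1 P2 R1 R2 hσ hP1 hP2 hR1 hR2 γ1 γ2 hind hd1 hd2
end

section
/- (Theorem 1) Fix σ² > 0, R1, R2 > 0 and a, b > 0, and set P1 = a·t, P2 = b·t. Then as t → ∞, t²·[ φ(R1,R2) − e^{σ²/P1}·( e^{−(σ²/P2)(2^{R2}−1)} − e^{−(σ²/P2)(2^{R1+R2}−1)} ) + e^{σ²/P1 + σ²/P2}·(σ⁴/(P1·P2))·2^{R1+R2}·R1·ln 2 ] → 0; that is, φ(R1,R2) = e^{σ²/P1}( e^{−(σ²/P2)(2^{R2}−1)} − e^{−(σ²/P2)(2^{R1+R2}−1)} ) − e^{σ²/P1+σ²/P2}(σ⁴/(P1P2))·2^{R1+R2}·R1·ln 2 + o(σ⁴/(P1P2)).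 -/
open MeasureTheory Real Filter

/-!
Write `u = σ²/P₁`, `v = σ²/P₂`, `A = 2^{R₂}`, `B = 2^{R₁+R₂}`, so that
`φ = v e^{u+v} ∫_A^B e^{-vz} e^{-Bu/z} dz`. Expanding `e^{-Bu/z} ≈ 1 - Bu/z`, the constant term
integrates exactly to the leading term `e^u (e^{-v(A-1)} - e^{-v(B-1)})`, and the linear term with
`e^{-vz}` replaced by `1` gives the correction `e^{u+v} u v B log (B/A)`. What is left is the
integral of `e^{-vz}(e^{-x} - 1 + x) + x(1 - e^{-vz})` with `x = Bu/z`, which is `O(u² + uv)`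
pointwise; with the prefactor `v` the error is `O(t⁻³)` when `P₁ = at`, `P₂ = bt`.
-/

open intervalIntegral Set

theorem integral_exp_neg_mul {v : ℝ} (hv : v ≠ 0) (A B : ℝ) :
    ∫ z in A..B, exp (-v * z) = (exp (-v * A) - exp (-v * B)) / v := by
  rw [integral_comp_mul_left (fun z => exp z) (neg_ne_zero.2 hv), integral_exp, smul_eq_mul,
    inv_neg, neg_mul, ← mul_neg, neg_sub, div_eq_inv_mul]

theorem abs_exp_neg_mul_exp_neg_sub_one_add_le {x w : ℝ} (hx : |x| ≤ 1) (hw : 0 ≤ w) :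
    |exp (-w) * (exp (-x) - 1) + x| ≤ x ^ 2 + |x| * w := by
  have hquad : |exp (-x) - 1 + x| ≤ x ^ 2 := by
    simpa [sub_neg_eq_add] using abs_exp_sub_one_sub_id_le (x := -x) (by rwa [abs_neg])
  have hexp_le : exp (-w) ≤ 1 := exp_le_one_iff.2 (by linarith)
  have hlin : 1 - exp (-w) ≤ w := by linarith [add_one_le_exp (-w)]
  calc |exp (-w) * (exp (-x) - 1) + x|
      = |exp (-w) * (exp (-x) - 1 + x) + x * (1 - exp (-w))| := by ring_nf
    _ ≤ exp (-w) * |exp (-x) - 1 + x| + |x| * (1 - exp (-w)) := by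
      refine (abs_add_le _ _).trans_eq ?_
      rw [abs_mul, abs_mul, abs_of_pos (exp_pos _),
        abs_of_nonneg (by linarith : (0 : ℝ) ≤ 1 - exp (-w))]
    _ ≤ 1 * x ^ 2 + |x| * w := by gcongr
    _ = x ^ 2 + |x| * w := by ring

section Interval

variable {A B : ℝ}

theorem integral_exp_neg_div_sub_mul_eq (hA : 0 < A) (hB : 0 < B) (c : ℝ) {v : ℝ}
    (hv : v ≠ 0) :
    ∫ z in A..B, exp (-(c / z) - v * z)
      = (exp (-v * A) - exp (-v * B)) / v - c * log (B / A)
        + ∫ z in A..B, (exp (-v * z) * (exp (-(c / z)) - 1) + c / z) := by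
  have hz : ∀ z ∈ uIcc A B, z ≠ 0 := fun z hz => ((lt_min hA hB).trans_le hz.1).ne'
  have hmain : IntervalIntegrable (fun z => exp (-(c / z) - v * z)) volume A B :=
    ContinuousOn.intervalIntegrable (by fun_prop (disch := exact hz))
  have hexp : IntervalIntegrable (fun z => exp (-v * z)) volume A B :=
    (by fun_prop : Continuous fun z => exp (-v * z)).intervalIntegrable _ _
  have hinv : IntervalIntegrable (fun z : ℝ => z⁻¹) volume A B :=
    intervalIntegral.intervalIntegrable_inv hz continuousOn_id
  have hrem : ∫ z in A..B, (exp (-v * z) * (exp (-(c / z)) - 1) + c / z)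
      = (∫ z in A..B, exp (-(c / z) - v * z)) - (∫ z in A..B, exp (-v * z))
        + c * ∫ z in A..B, z⁻¹ := by
    rw [← intervalIntegral.integral_const_mul, ← integral_sub hmain hexp,
      ← integral_add (hmain.sub hexp) (hinv.const_mul c)]
    congr 1 with z
    rw [sub_eq_add_neg (-(c / z)), exp_add, neg_mul]
    ring
  rw [hrem, integral_exp_neg_mul hv, integral_inv_of_pos hA hB]
  ring

theorem abs_integral_exp_neg_mul_exp_neg_div_sub_one_add_le (hA : 0 < A) (hAB : A ≤ B)
    {c v : ℝ} (hc : 0 ≤ c) (hcA : c ≤ A) (hv : 0 ≤ v) :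
    |∫ z in A..B, (exp (-v * z) * (exp (-(c / z)) - 1) + c / z)|
      ≤ (B - A) * ((c / A) ^ 2 + c * v) := by
  have hbound : ∀ z ∈ uIoc A B,
      ‖exp (-v * z) * (exp (-(c / z)) - 1) + c / z‖ ≤ (c / A) ^ 2 + c * v := by
    intro z hz
    rw [uIoc_of_le hAB] at hz
    have hz0 : 0 < z := hA.trans hz.1
    have hcz : c / z ≤ c / A := div_le_div_of_nonneg_left hc hA hz.1.le
    have hcz1 : |c / z| ≤ 1 := by
      rw [abs_of_nonneg (by positivity)]
      exact hcz.trans ((div_le_one hA).2 hcA)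
    calc ‖exp (-v * z) * (exp (-(c / z)) - 1) + c / z‖
        = |exp (-(v * z)) * (exp (-(c / z)) - 1) + c / z| := by rw [norm_eq_abs, neg_mul]
      _ ≤ (c / z) ^ 2 + |c / z| * (v * z) :=
        abs_exp_neg_mul_exp_neg_sub_one_add_le hcz1 (by positivity)
      _ = (c / z) ^ 2 + c * v := by
        rw [abs_of_nonneg (by positivity)]; field_simp
      _ ≤ (c / A) ^ 2 + c * v := by gcongr
  simpa [abs_of_nonneg (sub_nonneg.2 hAB), mul_comm] using
    norm_integral_le_of_norm_le_const hbound

end Interval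

theorem phiXP_sub_expansion_eq {σ2 P1 P2 : ℝ} (hσ : σ2 ≠ 0) (hP2 : P2 ≠ 0) (R1 R2 : ℝ) :
    phiXP σ2 P1 P2 R1 R2
        - exp (σ2 / P1) * (exp (-(σ2 / P2) * ((2:ℝ) ^ R2 - 1))
          - exp (-(σ2 / P2) * ((2:ℝ) ^ (R1 + R2) - 1)))
        + exp (σ2 / P1 + σ2 / P2) * (σ2 ^ 2 / (P1 * P2)) * (2:ℝ) ^ (R1 + R2) * R1 * log 2
      = σ2 / P2 * exp (σ2 / P1 + σ2 / P2) *
        ∫ z in (2:ℝ) ^ R2..(2:ℝ) ^ (R1 + R2),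
          (exp (-(σ2 / P2) * z) * (exp (-((2:ℝ) ^ (R1 + R2) * (σ2 / P1) / z)) - 1)
            + (2:ℝ) ^ (R1 + R2) * (σ2 / P1) / z) := by
  set A : ℝ := 2 ^ R2
  set B : ℝ := 2 ^ (R1 + R2)
  set u := σ2 / P1
  set v := σ2 / P2
  have hv : v ≠ 0 := div_ne_zero hσ hP2
  have hlog : log (B / A) = R1 * log 2 := by
    rw [← rpow_sub two_pos, add_sub_cancel_right, log_rpow two_pos]
  have hphi :
      phiXP σ2 P1 P2 R1 R2 = v * exp (u + v) * ∫ z in A..B, exp (-(B * u / z) - v * z) := by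
    unfold phiXP
    congr 2 with z
    congr 1
    simp only [B, u, v]
    ring
  rw [hphi, integral_exp_neg_div_sub_mul_eq (by positivity) (by positivity) (B * u) hv, hlog,
    show -v * (A - 1) = v + -v * A by ring, show -v * (B - 1) = v + -v * B by ring,
    exp_add u v, exp_add v, exp_add v, show σ2 ^ 2 / (P1 * P2) = u * v by ring]
  field_simp
  ring

theorem abs_phiXP_sub_expansion_le {σ2 P1 P2 : ℝ} (hσ : 0 < σ2) (hP1 : 0 < P1) (hP2 : 0 < P2)
    {R1 : ℝ} (hR1 : 0 ≤ R1) (R2 : ℝ) (hsmall : (2:ℝ) ^ (R1 + R2) * (σ2 / P1) ≤ 2 ^ R2) :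
    |phiXP σ2 P1 P2 R1 R2
        - exp (σ2 / P1) * (exp (-(σ2 / P2) * ((2:ℝ) ^ R2 - 1))
          - exp (-(σ2 / P2) * ((2:ℝ) ^ (R1 + R2) - 1)))
        + exp (σ2 / P1 + σ2 / P2) * (σ2 ^ 2 / (P1 * P2)) * (2:ℝ) ^ (R1 + R2) * R1 * log 2|
      ≤ σ2 / P2 * exp (σ2 / P1 + σ2 / P2) * (((2:ℝ) ^ (R1 + R2) - 2 ^ R2) *
          (((2:ℝ) ^ (R1 + R2) * (σ2 / P1) / 2 ^ R2) ^ 2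
            + (2:ℝ) ^ (R1 + R2) * (σ2 / P1) * (σ2 / P2))) := by
  rw [phiXP_sub_expansion_eq hσ.ne' hP2.ne', abs_mul, abs_of_pos (by positivity)]
  gcongr
  exact abs_integral_exp_neg_mul_exp_neg_div_sub_one_add_le (by positivity)
    (rpow_le_rpow_of_exponent_le one_le_two (by linarith)) (by positivity) hsmall
    (by positivity)

theorem phi_asymptotic_general
    (σ2 R1 R2 a b : ℝ) (hσ : 0 < σ2) (hR1 : 0 < R1)
    (ha : 0 < a) (hb : 0 < b) :
    Filter.Tendsto
      (fun t : ℝ =>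
        t ^ 2 *
          (phiXP σ2 (a * t) (b * t) R1 R2
            - Real.exp (σ2 / (a * t)) *
                (Real.exp (-(σ2 / (b * t)) * ((2:ℝ) ^ R2 - 1))
                  - Real.exp (-(σ2 / (b * t)) * ((2:ℝ) ^ (R1 + R2) - 1)))
            + Real.exp (σ2 / (a * t) + σ2 / (b * t))
                * (σ2 ^ 2 / ((a * t) * (b * t)))
                * (2:ℝ) ^ (R1 + R2) * R1 * Real.log 2))
      Filter.atTop (nhds 0) := by
  set A : ℝ := 2 ^ R2
  set B : ℝ := 2 ^ (R1 + R2)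
  have hA : 0 < A := by positivity
  set K := (B - A) * ((B / A) ^ 2 * σ2 ^ 3 / (a ^ 2 * b) + B * σ2 ^ 3 / (a * b ^ 2))
  have hdecay : Tendsto (fun t => exp (σ2 / (a * t) + σ2 / (b * t)) * K / t) atTop (nhds 0) := by
    have hdiv : ∀ {c : ℝ}, 0 < c → Tendsto (fun t => σ2 / (c * t)) atTop (nhds 0) :=
      fun hc => tendsto_const_nhds.div_atTop (tendsto_id.const_mul_atTop hc)
    have hsum : Tendsto (fun t => σ2 / (a * t) + σ2 / (b * t)) atTop (nhds 0) := by
      simpa using (hdiv ha).add (hdiv hb)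
    simpa [div_eq_mul_inv] using
      (((continuous_exp.tendsto 0).comp hsum).mul_const K).mul tendsto_inv_atTop_zero
  refine squeeze_zero_norm' ?_ hdecay
  filter_upwards [eventually_gt_atTop 0, eventually_ge_atTop (B * σ2 / (A * a))] with t ht htc
  have hc : B * (σ2 / (a * t)) ≤ A := by
    rw [div_le_iff₀ (by positivity)] at htc
    rw [mul_div_assoc', div_le_iff₀ (by positivity)]
    linarith
  rw [norm_mul, norm_of_nonneg (by positivity)]
  calc t ^ 2 * |_|
      ≤ t ^ 2 * (σ2 / (b * t) * exp (σ2 / (a * t) + σ2 / (b * t)) *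
          ((B - A) * ((B * (σ2 / (a * t)) / A) ^ 2 + B * (σ2 / (a * t)) * (σ2 / (b * t))))) := by
        gcongr
        exact abs_phiXP_sub_expansion_le hσ (by positivity) (by positivity) hR1.le R2 hc
    _ = exp (σ2 / (a * t) + σ2 / (b * t)) * K / t := by
        simp only [K]
        field_simp

/-- **Theorem 1.** With `P₁ = a·t`, `P₂ = b·t`, as `t → ∞`,
`t²·[φ(R₁,R₂) − e^{σ²/P₁}(e^{−(σ²/P₂)(2^{R₂}−1)} − e^{−(σ²/P₂)(2^{R₁+R₂}−1)})
  + e^{σ²/P₁+σ²/P₂}·(σ⁴/(P₁P₂))·2^{R₁+R₂}·R₁·ln 2] → 0`,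
i.e. the stated asymptotic expansion of `φ` holds up to `o(σ⁴/(P₁P₂))`. -/
theorem phi_asymptotic
    (σ2 R1 R2 a b : ℝ) (hσ : 0 < σ2) (hR1 : 0 < R1) (hR2 : 0 < R2)
    (ha : 0 < a) (hb : 0 < b) :
    Filter.Tendsto
      (fun t : ℝ =>
        t ^ 2 *
          (phiXP σ2 (a * t) (b * t) R1 R2
            - Real.exp (σ2 / (a * t)) *
                (Real.exp (-(σ2 / (b * t)) * ((2:ℝ) ^ R2 - 1))
                  - Real.exp (-(σ2 / (b * t)) * ((2:ℝ) ^ (R1 + R2) - 1)))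
            + Real.exp (σ2 / (a * t) + σ2 / (b * t))
                * (σ2 ^ 2 / ((a * t) * (b * t)))
                * (2:ℝ) ^ (R1 + R2) * R1 * Real.log 2))
      Filter.atTop (nhds 0) :=
  phi_asymptotic_general σ2 R1 R2 a b hσ hR1 ha hb
end

section
/- (Theorem 2) Define recursively on x > 0: ℏ_{K,K}(x) = 2^{R_K^Σ} − x, and for 1 ≤ k ≤ K−1, ℏ_{K,k}(x) = ∫_x^{2^{R_k^Σ}} t^{−1}·ℏ_{K,k+1}(t) dt. Define coefficients: c_{K,0} = 2^{R_K^Σ}; and for 1 ≤ k ≤ K−1: c_{k,i} = −c_{k+1,i−1}/i for i ∈ {1, …, K−k}, and c_{k,0} = Σ_{i=0}^{K−k−1} c_{k+1,i}·(ln(2^{R_k^Σ}))^{i+1}/(i+1) + (−1)^{K−k}·2^{R_k^Σ}. Then for every k ∈ {1, …, K} and every x > 0, ℏ_{K,k}(x) = (−1)^{K−k+1}·x + Σ_{i=0}^{K−k} c_{k,i}·(ln x)^i. -/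
/-!
Induct downward in `k`. If `ℏ_{K,k+1}(t) = s·t + Σ_i c_i (ln t)^i` on `t > 0`, then the integrand
`t⁻¹ ℏ_{K,k+1}(t)` has the antiderivative `s·t + Σ_i c_i (ln t)^{i+1}/(i+1)`, so
`ℏ_{K,k}(x) = s·(b − x) + Σ_i c_i ((ln b)^{i+1} − (ln x)^{i+1})/(i+1)` with `b = 2^{R_k^Σ}`. Reading off
the coefficients of `x` and of the powers of `ln x` gives exactly the recursion for `c_{k,i}`.
-/

open MeasureTheory Real Filter

/-- `hbarXP Rs K j x = ℏ_{K, K−j}(x)`, defined by downward recursion: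
`ℏ_{K,K}(x) = 2^{R_K^Σ} − x` and, for `1 ≤ k ≤ K−1`,
`ℏ_{K,k}(x) = ∫_x^{2^{R_k^Σ}} t⁻¹·ℏ_{K,k+1}(t) dt`. -/
noncomputable def hbarXP (Rs : ℕ → ℝ) (K : ℕ) : ℕ → ℝ → ℝ
  | 0, x => (2:ℝ) ^ Rs K - x
  | (j + 1), x => ∫ t in x..((2:ℝ) ^ Rs (K - (j + 1))), t⁻¹ * hbarXP Rs K j t

/-- `cXP Rs K j i = c_{K−j, i}`: `c_{K,0} = 2^{R_K^Σ}`, and for `1 ≤ k ≤ K−1`,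
`c_{k,i} = −c_{k+1,i−1}/i` for `i ∈ {1,…,K−k}` and
`c_{k,0} = Σ_{i=0}^{K−k−1} c_{k+1,i}·(ln 2^{R_k^Σ})^{i+1}/(i+1) + (−1)^{K−k}·2^{R_k^Σ}`. -/
noncomputable def cXP (Rs : ℕ → ℝ) (K : ℕ) : ℕ → ℕ → ℝ
  | 0, i => if i = 0 then (2:ℝ) ^ Rs K else 0
  | (j + 1), 0 =>
      (∑ i ∈ Finset.range (j + 1),
        cXP Rs K j i * (Real.log ((2:ℝ) ^ Rs (K - (j + 1)))) ^ (i + 1) / (i + 1))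
      + (-1 : ℝ) ^ (j + 1) * (2:ℝ) ^ Rs (K - (j + 1))
  | (j + 1), (i + 1) => - cXP Rs K j i / (i + 1)

section

open Finset

theorem hasDerivAt_sum_log_pow_succ_div (c : ℕ → ℝ) (n : ℕ) {t : ℝ} (ht : t ≠ 0) :
    HasDerivAt (fun t => ∑ i ∈ range n, c i * log t ^ (i + 1) / (i + 1))
      (t⁻¹ * ∑ i ∈ range n, c i * log t ^ i) t := by
  rw [mul_sum]
  refine HasDerivAt.fun_sum fun i _ => ?_
  have hpow := ((hasDerivAt_log ht).fun_pow (i + 1)).const_mul (c i) |>.div_const ((i : ℝ) + 1)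
  refine hpow.congr_deriv ?_
  rw [Nat.add_sub_cancel]
  push_cast
  field_simp

theorem integral_inv_mul_linear_add_sum_log_pow (s : ℝ) (c : ℕ → ℝ) (n : ℕ) {a b : ℝ}
    (ha : 0 < a) (hb : 0 < b) :
    ∫ t in a..b, t⁻¹ * (s * t + ∑ i ∈ range n, c i * log t ^ i)
      = s * (b - a) + ∑ i ∈ range n, c i * (log b ^ (i + 1) - log a ^ (i + 1)) / (i + 1) := by
  have hpos : ∀ t ∈ Set.uIcc a b, 0 < t := fun t ht => (lt_inf_iff.2 ⟨ha, hb⟩).trans_le ht.1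
  have hderiv : ∀ t ∈ Set.uIcc a b,
      HasDerivAt (fun t => s * t + ∑ i ∈ range n, c i * log t ^ (i + 1) / (i + 1))
        (t⁻¹ * (s * t + ∑ i ∈ range n, c i * log t ^ i)) t := by
    intro t ht
    have ht0 := (hpos t ht).ne'
    refine (((hasDerivAt_id' t).const_mul s).fun_add
      (hasDerivAt_sum_log_pow_succ_div c n ht0)).congr_deriv ?_
    field_simp
  have hcont : ContinuousOn (fun t => t⁻¹ * (s * t + ∑ i ∈ range n, c i * log t ^ i))
      (Set.uIcc a b) := by
    have hne : ∀ t ∈ Set.uIcc a b, t ≠ 0 := fun t ht => (hpos t ht).ne'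
    exact (continuousOn_inv₀.mono hne).mul (by fun_prop (disch := assumption))
  rw [intervalIntegral.integral_eq_sub_of_hasDerivAt hderiv hcont.intervalIntegrable]
  simp only [mul_sub, sub_div, sum_sub_distrib]
  ring

theorem hbarXP_eq (Rs : ℕ → ℝ) (K j : ℕ) {x : ℝ} (hx : 0 < x) :
    hbarXP Rs K j x
      = (-1 : ℝ) ^ (j + 1) * x + ∑ i ∈ range (j + 1), cXP Rs K j i * log x ^ i := by
  induction j generalizing x with
  | zero =>
    simp only [hbarXP, cXP, zero_add, pow_one, sum_range_one, if_true, pow_zero]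
    ring
  | succ j ih =>
    set b := (2 : ℝ) ^ Rs (K - (j + 1))
    have hb : 0 < b := rpow_pos_of_pos two_pos _
    have hpos : ∀ t ∈ Set.uIcc x b, 0 < t := fun t ht => (lt_inf_iff.2 ⟨hx, hb⟩).trans_le ht.1
    have hunfold : hbarXP Rs K (j + 1) x
        = ∫ t in x..b, t⁻¹ * ((-1) ^ (j + 1) * t
            + ∑ i ∈ range (j + 1), cXP Rs K j i * log t ^ i) :=
      intervalIntegral.integral_congr fun t ht => by rw [ih (hpos t ht)]
    have hc_zero : cXP Rs K (j + 1) 0 = (∑ i ∈ range (j + 1),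
        cXP Rs K j i * log b ^ (i + 1) / (i + 1)) + (-1) ^ (j + 1) * b := rfl
    have hc_succ : ∀ i, cXP Rs K (j + 1) (i + 1) = -cXP Rs K j i / (i + 1) := fun _ => rfl
    have hsum_succ : ∑ i ∈ range (j + 1), cXP Rs K (j + 1) (i + 1) * log x ^ (i + 1)
        = -∑ i ∈ range (j + 1), cXP Rs K j i * log x ^ (i + 1) / (i + 1) := by
      rw [← sum_neg_distrib]
      refine sum_congr rfl fun i _ => ?_
      rw [hc_succ]
      ring
    rw [hunfold, integral_inv_mul_linear_add_sum_log_pow _ _ _ hx hb,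
      sum_range_succ' (fun i => cXP Rs K (j + 1) i * log x ^ i), hc_zero, hsum_succ]
    simp only [mul_sub, sub_div, sum_sub_distrib]
    ring

end

theorem hbar_recursive_formula_general
    (K : ℕ) (R : ℕ → ℝ) :
    ∀ k ∈ Finset.Icc 1 K, ∀ x : ℝ, 0 < x →
      hbarXP (fun m => ∑ l ∈ Finset.Icc 1 m, R l) K (K - k) x
        = (-1 : ℝ) ^ (K - k + 1) * x
          + ∑ i ∈ Finset.range (K - k + 1),
              cXP (fun m => ∑ l ∈ Finset.Icc 1 m, R l) K (K - k) i
                * (Real.log x) ^ i :=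
  fun k _ _ hx => hbarXP_eq _ K (K - k) hx

/-- **Theorem 2.** For every `k ∈ {1,…,K}` and every `x > 0`,
`ℏ_{K,k}(x) = (−1)^{K−k+1}·x + Σ_{i=0}^{K−k} c_{k,i}·(ln x)^i`. -/
theorem hbar_recursive_formula
    (K : ℕ) (hK : 1 ≤ K) (R : ℕ → ℝ) (hR : ∀ k ∈ Finset.Icc 1 K, 0 < R k) :
    ∀ k ∈ Finset.Icc 1 K, ∀ x : ℝ, 0 < x →
      hbarXP (fun m => ∑ l ∈ Finset.Icc 1 m, R l) K (K - k) x
        = (-1 : ℝ) ^ (K - k + 1) * x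
          + ∑ i ∈ Finset.range (K - k + 1),
              cXP (fun m => ∑ l ∈ Finset.Icc 1 m, R l) K (K - k) i
                * (Real.log x) ^ i :=
  hbar_recursive_formula_general K R
end
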